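/- For every simple graph G, the map Aut_Graphs(G) → Aut_Part(P(G)) sending a graph automorphism σ to the induced map P(σ) is a group isomorphism; in particular Aut_Part(P(G)) ≅ Aut_Graphs(G). -/

import Mathlib

set_option linter.unusedSectionVars false

open Monoid

namespace PaperPG

/-! ### Generic notions: letters, reduced / cyclically reduced words, reduced forms -/

section Letters

variable {ι : Type*} (H : ι → Type*) [∀ i, Group (H i)]

/-- A letter: a vertex/index together with an element of the corresponding group. -/
abbrev Ltr : Type _ := (i : ι) × H i

/-- A (combinatorially) reduced word: all letters are non-identity and adjacent letters
belong to distinct factors. -/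
def IsRed (l : List (Ltr H)) : Prop :=
  (∀ x ∈ l, x.2 ≠ 1) ∧ l.Chain' fun a b => a.1 ≠ b.1

/-- A cyclically reduced word: reduced, and if it has length at least `2`, its first and last
letters belong to distinct factors. -/
def IsCycRed (l : List (Ltr H)) : Prop :=
  IsRed H l ∧ ∀ a ∈ l.head?, ∀ b ∈ l.getLast?, 2 ≤ l.length → a.1 ≠ b.1

theorem isRed_nil : IsRed H ([] : List (Ltr H)) := by
  constructor <;> simp [List.Chain']

theorem isCycRed_nil : IsCycRed H ([] : List (Ltr H)) := by
  refine ⟨isRed_nil H, ?_⟩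
  simp

theorem isCycRed_single (x : Ltr H) (hx : x.2 ≠ 1) : IsCycRed H [x] := by
  refine ⟨⟨by simpa using hx, by simp [List.Chain']⟩, ?_⟩
  simp

variable [DecidableEq ι] [∀ i, DecidableEq (H i)]

/-- The element of the free product `∗_{i} H i` determined by a word. -/
noncomputable def listProd (l : List (Ltr H)) : CoprodI H :=
  (l.map fun x => CoprodI.of x.2).prod

/-- The reduced form of a word: the unique reduced word representing the product of its
letters in the free product `∗_i H i`. -/
noncomputable def red (l : List (Ltr H)) : List (Ltr H) :=
  (CoprodI.Word.equiv (listProd H l)).toList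

/-- The set of indices (vertices) occurring in a word. -/
def verts (l : List (Ltr H)) : Set ι := {i | ∃ x ∈ l, x.1 = i}

/-- The formal inverse of a word: invert every letter and reverse. -/
def rawInv (l : List (Ltr H)) : List (Ltr H) :=
  (l.map fun x => (⟨x.1, x.2⁻¹⟩ : Ltr H)).reverse

end Letters

/-! ### Homomorphisms of (the underlying data of) partial groups -/

/-- `f` is a homomorphism of partial groups, from the partial group with domain `D₁` and
product `P₁` to the one with domain `D₂` and product `P₂`. -/
def IsHom {M N : Type*} (D₁ : Set (List M)) (P₁ : List M → M)
    (D₂ : Set (List N)) (P₂ : List N → N) (f : M → N) : Prop :=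
  (∀ u ∈ D₁, u.map f ∈ D₂) ∧ ∀ u ∈ D₁, P₂ (u.map f) = f (P₁ u)

theorem isHom_id {M : Type*} (D : Set (List M)) (P : List M → M) : IsHom D P D P id := by
  constructor <;> intro u hu <;> simp [hu]

theorem IsHom.comp {M₁ M₂ M₃ : Type*} {D₁ : Set (List M₁)} {P₁ : List M₁ → M₁}
    {D₂ : Set (List M₂)} {P₂ : List M₂ → M₂} {D₃ : Set (List M₃)} {P₃ : List M₃ → M₃}
    {g : M₂ → M₃} {f : M₁ → M₂} (hg : IsHom D₂ P₂ D₃ P₃ g) (hf : IsHom D₁ P₁ D₂ P₂ f) :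
    IsHom D₁ P₁ D₃ P₃ (g ∘ f) := by
  refine ⟨fun u hu => ?_, fun u hu => ?_⟩
  · rw [← List.map_map]
    exact hg.1 _ (hf.1 u hu)
  · rw [← List.map_map, hg.2 _ (hf.1 u hu), hf.2 u hu]
    rfl

/-! ### The partial group `M(G, H)` associated to a decorated graph -/

section Graph

variable {ι : Type*} (H : ι → Type*) [∀ i, Group (H i)]
  [DecidableEq ι] [∀ i, DecidableEq (H i)] (G : SimpleGraph ι)

/-- Membership in `M(G,H)`: a cyclically reduced word whose set of vertices is a clique. -/
def Mem (l : List (Ltr H)) : Prop := IsCycRed H l ∧ G.IsClique (verts H l)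

theorem mem_nil : Mem H G [] := by
  refine ⟨isCycRed_nil H, ?_⟩
  simp [verts, SimpleGraph.isClique_iff, Set.Pairwise]

theorem mem_single (v : ι) (h : H v) (hne : h ≠ 1) : Mem H G [⟨v, h⟩] := by
  refine ⟨isCycRed_single H _ hne, ?_⟩
  simp only [verts, SimpleGraph.isClique_iff, Set.Pairwise, List.mem_singleton]
  rintro a ⟨x, hx, rfl⟩ b ⟨y, hy, rfl⟩ hne'
  subst hx; subst hy
  exact absurd rfl hne'

/-- A word with letters elements of `M(G,H)` is in the domain `D(G,H)` iff all its letters are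
elements of `M(G,H)`, all occurring vertices lie in a common clique, and the reduced form of
any subproduct `u_i ⋯ u_j` is cyclically reduced. -/
def InD (W : List (List (Ltr H))) : Prop :=
  (∀ u ∈ W, Mem H G u) ∧
  G.IsClique {i | ∃ u ∈ W, i ∈ verts H u} ∧
  ∀ i j : ℕ, i ≤ j → j < W.length →
    IsCycRed H (red H (((W.drop i).take (j + 1 - i)).flatten))

/-- The underlying set of the partial group `M(G,H)`. -/
def Carrier : Type _ := {l : List (Ltr H) // Mem H G l}

/-- The domain of the partial group `M(G,H)`. -/
def pgD : Set (List (Carrier H G)) := {W | InD H G (W.map Subtype.val)}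

/-- The unit of the partial group `M(G,H)`: the empty word. -/
def one : Carrier H G := ⟨[], mem_nil H G⟩

/-- The product map of the partial group `M(G,H)`: the reduced form of the concatenation
(junk value `1` outside of the domain). -/
noncomputable def pgPi (W : List (Carrier H G)) : Carrier H G := by
  classical exact if h : Mem H G (red H (W.map Subtype.val).flatten) then ⟨_, h⟩ else one H G

/-- The inversion of the partial group `M(G,H)` (junk value `1` if the result were not a
member, which never happens). -/
noncomputable def invCar (x : Carrier H G) : Carrier H G := by
  classical exact if h : Mem H G (rawInv H x.val) then ⟨_, h⟩ else one H G

/-- The subset `H̃ᵥ` of `M(G,H)`: the empty word together with the one-letter words with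
letter a nontrivial element of `H v`. -/
def Htilde (v : ι) : Set (Carrier H G) :=
  {x | x.val = [] ∨ ∃ h : H v, h ≠ 1 ∧ x.val = [⟨v, h⟩]}

end Graph

/-! ### Induced maps -/

section Induced

variable {ι ι' : Type*} (H : ι → Type*) [∀ i, Group (H i)]
  [DecidableEq ι] [∀ i, DecidableEq (H i)] (G : SimpleGraph ι)
  (H' : ι' → Type*) [∀ i, Group (H' i)]
  [DecidableEq ι'] [∀ i, DecidableEq (H' i)] (G' : SimpleGraph ι')

/-- The letterwise map on words induced by a map of vertices `fG` and group homomorphisms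
`fH v : H v →* H' (fG v)`. -/
def rawInduced (fG : ι → ι') (fH : ∀ i, H i →* H' (fG i)) (l : List (Ltr H)) :
    List (Ltr H') :=
  l.map fun x => ⟨fG x.1, fH x.1 x.2⟩

/-- The map `M(f_G, {f_v}) : M(G,H) → M(G',H')` (junk value `1` if the image word were not a
member; this never happens when the `fH v` are injective). -/
noncomputable def inducedCar (fG : ι → ι') (fH : ∀ i, H i →* H' (fG i))
    (x : Carrier H G) : Carrier H' G' := by
  classical exact if h : Mem H' G' (rawInduced H H' fG fH x.val) then ⟨_, h⟩ else one H' G'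

/-- A homomorphism of partial groups `M(G,H) → M(G',H')` has torsion-free kernel if the only
element of finite order (as an element of the ambient free product) sent to `1` is `1`. -/
def TFKer (f : Carrier H G → Carrier H' G') : Prop :=
  ∀ x : Carrier H G, f x = one H' G' → IsOfFinOrder (listProd H x.val) → x = one H G

end Induced

/-! ### Automorphism groups -/

section Aut

variable {ι : Type*} (H : ι → Type*) [∀ i, Group (H i)]
  [DecidableEq ι] [∀ i, DecidableEq (H i)] (G : SimpleGraph ι)

/-- The automorphism group of the partial group `M(G,H)`, as a subgroup of the permutation
group of its carrier: bijections that are homomorphisms in both directions. -/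
noncomputable def pgAut : Subgroup (Equiv.Perm (Carrier H G)) where
  carrier := {f | IsHom (pgD H G) (pgPi H G) (pgD H G) (pgPi H G) f ∧
    IsHom (pgD H G) (pgPi H G) (pgD H G) (pgPi H G) f.symm}
  one_mem' := ⟨isHom_id _ _, isHom_id _ _⟩
  mul_mem' := by
    rintro f g ⟨hf, hf'⟩ ⟨hg, hg'⟩
    exact ⟨hf.comp hg, hg'.comp hf'⟩
  inv_mem' := by
    rintro f ⟨hf, hf'⟩
    exact ⟨hf', by simpa [Equiv.Perm.inv_def] using hf⟩

/-- The automorphism group of a simple graph, as a subgroup of the permutation group of its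
vertices: bijections such that both the map and its inverse send edges to edges. -/
def graphAut : Subgroup (Equiv.Perm ι) where
  carrier := {σ | (∀ a b, G.Adj a b → G.Adj (σ a) (σ b)) ∧
    (∀ a b, G.Adj a b → G.Adj (σ.symm a) (σ.symm b))}
  one_mem' := ⟨fun a b h => h, fun a b h => h⟩
  mul_mem' := by
    rintro f g ⟨hf, hf'⟩ ⟨hg, hg'⟩
    exact ⟨fun a b h => hf _ _ (hg _ _ h), fun a b h => hg' _ _ (hf' _ _ h)⟩
  inv_mem' := by
    rintro f ⟨hf, hf'⟩
    exact ⟨hf', by simpa [Equiv.Perm.inv_def] using hf⟩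

/-- An automorphism `f` of `M(G,H)` covers the vertex map `σ` if for every vertex `v`,
`f` sends the nontrivial elements of `H̃ᵥ` into `H̃_{σ v}`. -/
def CoversVia (f : Carrier H G → Carrier H G) (σ : ι → ι) : Prop :=
  ∀ (v : ι) (h : H v) (hne : h ≠ 1),
    ∃ h' : H (σ v), h' ≠ 1 ∧ (f ⟨[⟨v, h⟩], mem_single H G v h hne⟩).val = [⟨σ v, h'⟩]

end Aut

/-! ### Subgroups and locally finite subgroups of partial groups -/

/-- A subset `N` is a subgroup of the partial group with data `(D, P, inv)`: it is closed
under inversion, every word with letters in `N` is in the domain `D`, and `P` maps such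
words into `N`. -/
def IsSubgroupOf {M : Type*} (D : Set (List M)) (P : List M → M) (inv : M → M)
    (N : Set M) : Prop :=
  (∀ x ∈ N, inv x ∈ N) ∧ ∀ W : List M, (∀ u ∈ W, u ∈ N) → W ∈ D ∧ P W ∈ N

/-- A subgroup `N` of a partial group is locally finite: every finite subset of `N` is
contained in a finite subgroup contained in `N` (i.e. every finitely generated subgroup of the
group `N` is finite). -/
def IsLocFinSubgroupOf {M : Type*} (D : Set (List M)) (P : List M → M) (inv : M → M)
    (N : Set M) : Prop :=
  IsSubgroupOf D P inv N ∧
    ∀ S : Set M, S ⊆ N → S.Finite →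
      ∃ K : Set M, S ⊆ K ∧ K ⊆ N ∧ IsSubgroupOf D P inv K ∧ K.Finite

end PaperPG

namespace PaperPG

/-- The group `ℤ/2`, written multiplicatively: the decorating group of path partial groups. -/
abbrev Z2 : Type := Multiplicative (ZMod 2)

/-! ### Auxiliary lemmas for Statement 7 -/

section RedLemmas

variable {ι : Type*} (H : ι → Type*) [∀ i, Group (H i)]
  [DecidableEq ι] [∀ i, DecidableEq (H i)]

theorem isRed_word (w : CoprodI.Word H) : IsRed H w.toList :=
  ⟨w.ne_one, w.chain_ne⟩

theorem listProd_eq_wordProd (l : List (Ltr H)) (h1 : ∀ x ∈ l, x.2 ≠ 1)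
    (h2 : l.Chain' fun a b => a.1 ≠ b.1) :
    listProd H l = CoprodI.Word.prod ⟨l, h1, (by unfold List.Chain' at h2; exact h2)⟩ := rfl

theorem listProd_toList (w : CoprodI.Word H) : listProd H w.toList = w.prod := rfl

theorem red_of_isRed {l : List (Ltr H)} (h : IsRed H l) : red H l = l := by
  have : CoprodI.Word.equiv (listProd H l) = ⟨l, h.1, h.2⟩ := by
    rw [listProd_eq_wordProd H l h.1 h.2,
      show CoprodI.Word.prod ⟨l, h.1, h.2⟩ = CoprodI.Word.equiv.symm ⟨l, h.1, h.2⟩ from rfl]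
    exact CoprodI.Word.equiv.apply_symm_apply _
  rw [red, this]

theorem isRed_red (l : List (Ltr H)) : IsRed H (red H l) :=
  isRed_word H _

theorem listProd_red (l : List (Ltr H)) : listProd H (red H l) = listProd H l := by
  rw [red, listProd_toList,
    show (CoprodI.Word.equiv (listProd H l)).prod
      = CoprodI.Word.equiv.symm (CoprodI.Word.equiv (listProd H l)) from rfl]
  exact CoprodI.Word.equiv.symm_apply_apply _

theorem red_congr {l l' : List (Ltr H)} (h : listProd H l = listProd H l') :
    red H l = red H l' := by rw [red, red, h]

theorem red_nil : red H ([] : List (Ltr H)) = [] := red_of_isRed H (isRed_nil H)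

end RedLemmas
section Relabel

variable {ι : Type*} [DecidableEq ι]

/-- Relabel a letter along a vertex map. -/
def rel (σ : ι → ι) : Ltr (fun _ : ι => Z2) → Ltr (fun _ : ι => Z2) := fun x => ⟨σ x.1, x.2⟩

theorem rel_symm_comp (σ : Equiv.Perm ι) (x : Ltr (fun _ : ι => Z2)) :
    rel (⇑σ.symm) (rel (⇑σ) x) = x := by
  cases x with
  | mk a b => simp [rel]

theorem map_rel_symm (σ : Equiv.Perm ι) (l : List (Ltr (fun _ : ι => Z2))) :
    (l.map (rel ⇑σ)).map (rel ⇑σ.symm) = l := by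
  rw [List.map_map]
  conv_rhs => rw [← List.map_id l]
  exact List.map_congr_left fun x _ => rel_symm_comp σ x

/-- The endomorphism of the free product induced by a vertex map. -/
noncomputable def mapHom (σ : ι → ι) :
    CoprodI (fun _ : ι => Z2) →* CoprodI (fun _ : ι => Z2) :=
  CoprodI.lift fun i => (CoprodI.of (M := fun _ : ι => Z2) (i := σ i))

theorem listProd_map (σ : ι → ι) (l : List (Ltr (fun _ : ι => Z2))) :
    listProd _ (l.map (rel σ)) = mapHom σ (listProd _ l) := by
  rw [listProd, listProd, map_list_prod, List.map_map, List.map_map]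
  congr 1

theorem isRed_map {σ : ι → ι} (hσ : Function.Injective σ)
    {l : List (Ltr (fun _ : ι => Z2))} (h : IsRed _ l) : IsRed _ (l.map (rel σ)) := by
  refine ⟨?_, ?_⟩
  · intro x hx
    rcases List.mem_map.mp hx with ⟨y, hy, rfl⟩
    exact h.1 y hy
  · simp only [List.Chain', List.isChain_map]
    exact List.IsChain.imp (fun {a b} hab e => hab (hσ e)) h.2

theorem red_map (σ : ι → ι) (hσ : Function.Injective σ) (l : List (Ltr (fun _ : ι => Z2))) :
    red _ (l.map (rel σ)) = (red _ l).map (rel σ) := by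
  have h1 : listProd _ (l.map (rel σ)) = listProd _ ((red _ l).map (rel σ)) := by
    rw [listProd_map, listProd_map, listProd_red]
  rw [red_congr _ h1, red_of_isRed _ (isRed_map hσ (isRed_red _ l))]

theorem isCycRed_map {σ : ι → ι} (hσ : Function.Injective σ)
    {l : List (Ltr (fun _ : ι => Z2))} (h : IsCycRed _ l) : IsCycRed _ (l.map (rel σ)) := by
  refine ⟨isRed_map hσ h.1, ?_⟩
  intro a ha b hb hlen
  rw [List.head?_map] at ha
  rw [List.getLast?_map] at hb
  rw [List.length_map] at hlen
  rcases Option.map_eq_some_iff.mp ha with ⟨a', ha', rfl⟩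
  rcases Option.map_eq_some_iff.mp hb with ⟨b', hb', rfl⟩
  exact fun e => h.2 a' ha' b' hb' hlen (hσ e)

theorem verts_map (σ : ι → ι) (l : List (Ltr (fun _ : ι => Z2))) :
    verts _ (l.map (rel σ)) = σ '' verts _ l := by
  ext i
  constructor
  · rintro ⟨x, hx, rfl⟩
    rcases List.mem_map.mp hx with ⟨y, hy, rfl⟩
    exact ⟨y.1, ⟨y, hy, rfl⟩, rfl⟩
  · rintro ⟨j, ⟨y, hy, rfl⟩, rfl⟩
    exact ⟨rel σ y, List.mem_map_of_mem hy, rfl⟩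

theorem isClique_image {G : SimpleGraph ι} {σ : Equiv.Perm ι} (hσ : σ ∈ graphAut G)
    {s : Set ι} (hs : G.IsClique s) : G.IsClique (⇑σ '' s) := by
  rw [SimpleGraph.isClique_iff]
  rintro _ ⟨a, ha, rfl⟩ _ ⟨b, hb, rfl⟩ hne
  exact hσ.1 a b (hs ha hb fun h => hne (by rw [h]))

variable {G : SimpleGraph ι}

theorem mem_map {σ : Equiv.Perm ι} (hσ : σ ∈ graphAut G)
    {l : List (Ltr (fun _ : ι => Z2))} (h : Mem _ G l) : Mem _ G (l.map (rel ⇑σ)) := by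
  refine ⟨isCycRed_map σ.injective h.1, ?_⟩
  rw [verts_map]
  exact isClique_image hσ h.2

theorem mem_unmap {σ : Equiv.Perm ι} (hσ : σ ∈ graphAut G)
    {l : List (Ltr (fun _ : ι => Z2))} (h : Mem _ G (l.map (rel ⇑σ))) : Mem _ G l := by
  have h2 := mem_map (σ := σ⁻¹) ((graphAut G).inv_mem hσ) h
  rwa [show ⇑(σ⁻¹) = ⇑σ.symm from rfl, map_rel_symm] at h2

theorem inD_map {σ : Equiv.Perm ι} (hσ : σ ∈ graphAut G)
    {L : List (List (Ltr (fun _ : ι => Z2)))} (h : InD _ G L) :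
    InD _ G (L.map (List.map (rel ⇑σ))) := by
  obtain ⟨h1, h2, h3⟩ := h
  refine ⟨?_, ?_, ?_⟩
  · intro u hu
    rcases List.mem_map.mp hu with ⟨u', hu', rfl⟩
    exact mem_map hσ (h1 u' hu')
  · have e : {i | ∃ u ∈ L.map (List.map (rel ⇑σ)), i ∈ verts _ u}
        = ⇑σ '' {i | ∃ u ∈ L, i ∈ verts _ u} := by
      ext i
      constructor
      · rintro ⟨u, hu, hi⟩
        rcases List.mem_map.mp hu with ⟨u', hu', rfl⟩
        rw [verts_map] at hi
        rcases hi with ⟨j, hj, rfl⟩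
        exact ⟨j, ⟨u', hu', hj⟩, rfl⟩
      · rintro ⟨j, ⟨u', hu', hj⟩, rfl⟩
        exact ⟨u'.map (rel ⇑σ), List.mem_map_of_mem hu', by
          rw [verts_map]; exact ⟨j, hj, rfl⟩⟩
    rw [e]
    exact isClique_image hσ h2
  · intro i j hij hj
    rw [List.length_map] at hj
    have key : (((L.map (List.map (rel ⇑σ))).drop i).take (j + 1 - i)).flatten
        = (((L.drop i).take (j + 1 - i)).flatten).map (rel ⇑σ) := by
      rw [← List.map_drop, ← List.map_take, List.map_flatten]
    rw [key, red_map _ σ.injective]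
    exact isCycRed_map σ.injective (h3 i j hij hj)

end Relabel
section CarrierMap

variable {ι : Type*} [DecidableEq ι] {G : SimpleGraph ι}

@[simp] theorem cmap_nil :
    List.map Subtype.val ([] : List (Carrier (fun _ : ι => Z2) G)) = [] := rfl

@[simp] theorem cmap_cons (x : Carrier (fun _ : ι => Z2) G) (W : List (Carrier (fun _ : ι => Z2) G)) :
    List.map Subtype.val (x :: W) = x.val :: List.map Subtype.val W := rfl

theorem pgPi_eq_of_mem (W : List (Carrier (fun _ : ι => Z2) G))
    (h : Mem _ G (red _ ((W.map Subtype.val).flatten))) :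
    pgPi _ G W = ⟨_, h⟩ := by
  unfold pgPi
  exact dif_pos h

theorem pgPi_eq_of_not_mem (W : List (Carrier (fun _ : ι => Z2) G))
    (h : ¬ Mem _ G (red _ ((W.map Subtype.val).flatten))) :
    pgPi _ G W = one _ G := by
  unfold pgPi
  exact dif_neg h

/-- The map on the carrier of `P(G)` induced by a graph automorphism. -/
def fMap (σ : Equiv.Perm ι) (hσ : σ ∈ graphAut G) :
    Carrier (fun _ : ι => Z2) G → Carrier (fun _ : ι => Z2) G :=
  fun x => ⟨x.val.map (rel ⇑σ), mem_map hσ x.2⟩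

theorem flatten_map_fMap (σ : Equiv.Perm ι) (hσ : σ ∈ graphAut G)
    (W : List (Carrier (fun _ : ι => Z2) G)) :
    (W.map (fMap σ hσ)).map Subtype.val = (W.map Subtype.val).map (List.map (rel ⇑σ)) := by
  induction W with
  | nil => rfl
  | cons a W ih => exact congrArg (List.cons _) ih

theorem pgPi_map (σ : Equiv.Perm ι) (hσ : σ ∈ graphAut G)
    (W : List (Carrier (fun _ : ι => Z2) G)) :
    pgPi _ G (W.map (fMap σ hσ)) = fMap σ hσ (pgPi _ G W) := by
  have key : red _ (((W.map (fMap σ hσ)).map Subtype.val).flatten)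
      = (red _ ((W.map Subtype.val).flatten)).map (rel ⇑σ) := by
    rw [flatten_map_fMap, ← List.map_flatten, red_map _ σ.injective]
  by_cases h : Mem _ G (red _ ((W.map Subtype.val).flatten))
  · have h' : Mem _ G (red _ (((W.map (fMap σ hσ)).map Subtype.val).flatten)) := by
      rw [key]; exact mem_map hσ h
    rw [pgPi_eq_of_mem _ h', pgPi_eq_of_mem _ h]
    apply Subtype.ext
    exact key
  · have h' : ¬ Mem _ G (red _ (((W.map (fMap σ hσ)).map Subtype.val).flatten)) := by
      rw [key]; exact fun hc => h (mem_unmap hσ hc)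
    rw [pgPi_eq_of_not_mem _ h', pgPi_eq_of_not_mem _ h]
    apply Subtype.ext
    rfl

theorem isHom_fMap (σ : Equiv.Perm ι) (hσ : σ ∈ graphAut G) :
    IsHom (pgD _ G) (pgPi _ G) (pgD _ G) (pgPi _ G) (fMap σ hσ) := by
  constructor
  · intro W hW
    show InD _ G ((W.map (fMap σ hσ)).map Subtype.val)
    rw [flatten_map_fMap]
    exact inD_map hσ hW
  · intro W _
    exact pgPi_map σ hσ W

/-- The permutation of the carrier induced by a graph automorphism. -/
def ΘPerm (σ : ↥(graphAut G)) : Equiv.Perm (Carrier (fun _ : ι => Z2) G) where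
  toFun := fMap σ.val σ.2
  invFun := fMap (σ⁻¹ : ↥(graphAut G)).val (σ⁻¹ : ↥(graphAut G)).2
  left_inv x := by
    apply Subtype.ext
    show (x.val.map (rel ⇑σ.val)).map (rel ⇑(σ.val)⁻¹) = x.val
    exact map_rel_symm σ.val x.val
  right_inv x := by
    apply Subtype.ext
    show (x.val.map (rel ⇑(σ.val)⁻¹)).map (rel ⇑σ.val) = x.val
    have := map_rel_symm (σ.val)⁻¹ x.val
    simpa [Equiv.Perm.inv_def] using this

theorem ΘPerm_symm (σ : ↥(graphAut G)) : (ΘPerm σ).symm = ΘPerm σ⁻¹ := rfl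

/-- The homomorphism `Aut_Graphs(G) → Aut_Part(P(G))`. -/
noncomputable def Θhom : ↥(graphAut G) →* ↥(pgAut (fun _ : ι => Z2) G) where
  toFun σ := ⟨ΘPerm σ, isHom_fMap σ.val σ.2, by
    rw [show ⇑(ΘPerm σ).symm = fMap (σ⁻¹ : ↥(graphAut G)).val (σ⁻¹ : ↥(graphAut G)).2 from rfl]
    exact isHom_fMap _ _⟩
  map_one' := by
    apply Subtype.ext
    apply Equiv.ext
    intro x
    apply Subtype.ext
    show x.val.map (rel ⇑((1 : ↥(graphAut G)).val)) = x.val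
    have : rel (ι := ι) (⇑((1 : ↥(graphAut G)).val)) = id := rfl
    rw [this, List.map_id]
  map_mul' σ τ := by
    apply Subtype.ext
    apply Equiv.ext
    intro x
    apply Subtype.ext
    show x.val.map (rel ⇑((σ * τ).val)) = (x.val.map (rel ⇑τ.val)).map (rel ⇑σ.val)
    rw [List.map_map]
    rfl

end CarrierMap
section Sngl

variable {ι : Type*} [DecidableEq ι] {G : SimpleGraph ι}

/-- The nontrivial element of `ℤ/2`. -/
def g₀ : Z2 := Multiplicative.ofAdd 1

theorem g₀_ne_one : (g₀ : Z2) ≠ 1 := by decide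

theorem z2_mul_self (g : Z2) : g * g = 1 := by revert g; decide

theorem z2_eq_g₀ (g : Z2) (h : g ≠ 1) : g = g₀ := by revert g; decide

/-- The singleton element of `P(G)` at a vertex. -/
def sngl (v : ι) : Carrier (fun _ : ι => Z2) G :=
  ⟨[⟨v, g₀⟩], mem_single (fun _ : ι => Z2) G v g₀ g₀_ne_one⟩

theorem sngl_injective : Function.Injective (sngl (ι := ι) (G := G)) := by
  intro v w h
  have := congrArg Subtype.val h
  simp only [sngl, List.cons.injEq] at this
  exact congrArg Sigma.fst this.1

theorem eq_one_iff_val_nil (x : Carrier (fun _ : ι => Z2) G) :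
    x = one _ G ↔ x.val = [] := by
  constructor
  · rintro rfl; rfl
  · intro h; exact Subtype.ext h

theorem nil_mem_pgD : ([] : List (Carrier (fun _ : ι => Z2) G)) ∈ pgD _ G := by
  refine ⟨by simp, ?_, ?_⟩
  · intro a ha
    simp at ha
  · intro i j _ hj
    simp at hj

theorem pgPi_nil : pgPi _ G ([] : List (Carrier (fun _ : ι => Z2) G)) = one _ G := by
  have h : Mem (fun _ : ι => Z2) G (red _ ((([] : List (Carrier (fun _ : ι => Z2) G)).map
      Subtype.val).flatten)) := by
    simp only [cmap_nil, List.flatten_nil, red_nil]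
    exact mem_nil _ G
  rw [pgPi_eq_of_mem _ h]
  apply Subtype.ext
  simp only [List.map_nil, List.flatten_nil, red_nil]
  rfl

theorem verts_subset {l l' : List (Ltr (fun _ : ι => Z2))} (h : ∀ x ∈ l, x ∈ l') :
    verts _ l ⊆ verts _ l' := by
  rintro i ⟨x, hx, rfl⟩
  exact ⟨x, h x hx, rfl⟩

/-- Domain membership criterion for a two-element word. -/
theorem inD_pair {x y : Carrier (fun _ : ι => Z2) G}
    (hcl : G.IsClique (verts _ x.val ∪ verts _ y.val))
    (hxy : IsCycRed _ (red _ (x.val ++ y.val))) :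
    [x, y] ∈ pgD _ G := by
  refine ⟨?_, ?_, ?_⟩
  · intro u hu
    change u ∈ [x.val, y.val] at hu
    simp only [cmap_cons, cmap_nil, List.mem_cons, List.not_mem_nil, or_false]
      at hu
    rcases hu with rfl | rfl
    exacts [x.2, y.2]
  · have e : {i | ∃ u ∈ [x, y].map Subtype.val, i ∈ verts (fun _ : ι => Z2) u}
        = verts _ x.val ∪ verts _ y.val := by
      change {i | ∃ u ∈ [x.val, y.val], i ∈ verts (fun _ : ι => Z2) u} = _
      ext i
      simp only [cmap_cons, cmap_nil, List.mem_cons, List.not_mem_nil, or_false,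
        Set.mem_setOf_eq, Set.mem_union]
      constructor
      · rintro ⟨u, rfl | rfl, hu⟩
        exacts [Or.inl hu, Or.inr hu]
      · rintro (h | h)
        exacts [⟨x.val, Or.inl rfl, h⟩, ⟨y.val, Or.inr rfl, h⟩]
    rw [e]
    exact hcl
  · intro i j hij hj
    change j < 2 at hj
    change IsCycRed _ (red _ ((([x.val, y.val]).drop i).take (j + 1 - i)).flatten)
    interval_cases j <;> interval_cases i <;>
      simp only [List.map_cons, List.map_nil, List.drop, List.take, List.flatten_cons,
        List.flatten_nil, List.append_nil]
    · rw [red_of_isRed _ x.2.1.1]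
      exact x.2.1
    · exact hxy
    · rw [red_of_isRed _ y.2.1.1]
      exact y.2.1

theorem pgPi_pair {x y : Carrier (fun _ : ι => Z2) G}
    (h : Mem _ G (red _ (x.val ++ y.val))) :
    pgPi _ G [x, y] = ⟨red _ (x.val ++ y.val), h⟩ := by
  have e : (([x, y].map Subtype.val).flatten) = x.val ++ y.val := by
    show [x.val, y.val].flatten = _; simp
  have h' : Mem _ G (red _ (([x, y].map Subtype.val).flatten)) := by rw [e]; exact h
  rw [pgPi_eq_of_mem _ h']
  apply Subtype.ext
  show red _ (([x, y].map Subtype.val).flatten) = red _ (x.val ++ y.val)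
  rw [e]

end Sngl
section Squares

variable {ι : Type*} [DecidableEq ι] {G : SimpleGraph ι}

theorem sngl_val (v : ι) : (sngl (G := G) v).val = [⟨v, g₀⟩] := rfl

theorem verts_single (v : ι) (h : Z2) :
    verts (fun _ : ι => Z2) [⟨v, h⟩] = {v} := by
  ext i
  simp only [verts, List.mem_singleton, Set.mem_setOf_eq, Set.mem_singleton_iff]
  constructor
  · rintro ⟨x, rfl, rfl⟩
    rfl
  · rintro rfl
    exact ⟨⟨i, h⟩, rfl, rfl⟩

theorem red_sq (v : ι) :
    red _ ([⟨v, g₀⟩, ⟨v, g₀⟩] : List (Ltr (fun _ : ι => Z2))) = [] := by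
  have e : listProd _ ([⟨v, g₀⟩, ⟨v, g₀⟩] : List (Ltr (fun _ : ι => Z2)))
      = listProd _ ([] : List (Ltr (fun _ : ι => Z2))) := by
    simp only [listProd, List.map_cons, List.map_nil, List.prod_cons, List.prod_nil, mul_one]
    rw [← map_mul, z2_mul_self, map_one]
  rw [red_congr _ e, red_nil]

theorem sngl_append (v : ι) :
    (sngl (G := G) v).val ++ (sngl (G := G) v).val
      = ([⟨v, g₀⟩, ⟨v, g₀⟩] : List (Ltr (fun _ : ι => Z2))) := rfl

theorem inD_sq (v : ι) : ([sngl v, sngl v] : List (Carrier (fun _ : ι => Z2) G)) ∈ pgD _ G := by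
  refine inD_pair ?_ ?_
  · rw [sngl_val, verts_single, Set.union_self]
    exact G.isClique_singleton v
  · rw [sngl_append, red_sq]
    exact isCycRed_nil _

theorem pgPi_sq (v : ι) :
    pgPi _ G ([sngl v, sngl v] : List (Carrier (fun _ : ι => Z2) G)) = one _ G := by
  have h : Mem (fun _ : ι => Z2) G (red _ ((sngl (G := G) v).val ++ (sngl (G := G) v).val)) := by
    rw [sngl_append, red_sq]
    exact mem_nil _ G
  rw [pgPi_pair h]
  apply Subtype.ext
  show red _ ((sngl (G := G) v).val ++ (sngl (G := G) v).val) = []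
  rw [sngl_append, red_sq]

theorem length_le_one_of_sq (y : Carrier (fun _ : ι => Z2) G)
    (h : pgPi _ G [y, y] = one _ G) : y.val.length ≤ 1 := by
  by_contra hlen
  push_neg at hlen
  set l := y.val with hly
  have hne : l ≠ [] := by
    intro e
    rw [e] at hlen
    simp at hlen
  have ha : l.head? = some (l.head hne) := List.head?_eq_head hne
  have hb : l.getLast? = some (l.getLast hne) := List.getLast?_eq_getLast hne
  have hfst : (l.head hne).1 ≠ (l.getLast hne).1 :=
    y.2.1.2 _ (by rw [ha]; rfl) _ (by rw [hb]; rfl) hlen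
  have hred : IsRed _ (l ++ l) := by
    refine ⟨?_, ?_⟩
    · intro x hx
      rcases List.mem_append.mp hx with hx | hx
      exacts [y.2.1.1.1 x hx, y.2.1.1.1 x hx]
    · rw [List.Chain', List.isChain_append]
      refine ⟨y.2.1.1.2, y.2.1.1.2, ?_⟩
      intro x hx z hz
      rw [hb] at hx
      rw [ha] at hz
      rw [Option.mem_some_iff] at hx hz
      subst hx
      subst hz
      exact fun e => hfst e.symm
  have hredeq : red _ (l ++ l) = l ++ l := red_of_isRed _ hred
  have hmem : Mem _ G (red _ (l ++ l)) := by
    rw [hredeq]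
    refine ⟨⟨hred, ?_⟩, ?_⟩
    · intro a ha' b hb' _
      rw [List.head?_append, ha] at ha'
      rw [List.getLast?_append, hb] at hb'
      simp only [Option.or_some, Option.mem_some_iff] at ha' hb'
      subst ha'
      subst hb'
      exact hfst
    · have e : verts (fun _ : ι => Z2) (l ++ l) = verts _ l := by
        ext i
        constructor
        · rintro ⟨x, hx, rfl⟩
          rcases List.mem_append.mp hx with hx | hx
          exacts [⟨x, hx, rfl⟩, ⟨x, hx, rfl⟩]
        · rintro ⟨x, hx, rfl⟩
          exact ⟨x, List.mem_append.mpr (Or.inl hx), rfl⟩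
      rw [e]
      exact y.2.2
  have hval : ([] : List (Ltr (fun _ : ι => Z2))) = red _ (l ++ l) := by
    have hp := pgPi_pair (x := y) (y := y) hmem
    rw [h] at hp
    exact congrArg Subtype.val hp
  rw [hredeq] at hval
  rcases List.append_eq_nil_iff.mp hval.symm with ⟨e, _⟩
  exact hne e

end Squares
section Detect

variable {ι : Type*} [DecidableEq ι] {G : SimpleGraph ι}

theorem exists_sngl (y : Carrier (fun _ : ι => Z2) G) (hy : y ≠ one _ G)
    (h : pgPi _ G [y, y] = one _ G) : ∃ v, y = sngl v := by
  have hlen := length_le_one_of_sq y h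
  have hne : y.val ≠ [] := fun e => hy (Subtype.ext e)
  have h1 : y.val.length = 1 := by
    have := List.length_pos_iff.mpr hne
    omega
  obtain ⟨a, ha⟩ := List.length_eq_one_iff.mp h1
  have ha2 : a.2 ≠ 1 := y.2.1.1.1 a (by rw [ha]; exact List.mem_singleton_self a)
  have hg : a.2 = g₀ := z2_eq_g₀ _ ha2
  refine ⟨a.1, Subtype.ext ?_⟩
  rw [ha, sngl_val]
  cases a
  simp only [List.cons.injEq, and_true]
  exact congrArg _ hg

theorem inD_pair_sngl {v w : ι} (hadj : G.Adj v w) :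
    ([sngl v, sngl w] : List (Carrier (fun _ : ι => Z2) G)) ∈ pgD _ G := by
  have hchain : ([⟨v, g₀⟩, ⟨w, g₀⟩] : List (Ltr (fun _ : ι => Z2))).Chain'
      (fun a b => a.1 ≠ b.1) := List.isChain_pair.mpr hadj.ne
  have hisred : IsRed (fun _ : ι => Z2) [⟨v, g₀⟩, ⟨w, g₀⟩] := by
    refine ⟨?_, hchain⟩
    intro x hx
    rcases List.mem_cons.mp hx with rfl | hx
    · exact g₀_ne_one
    rcases List.mem_cons.mp hx with rfl | hx
    · exact g₀_ne_one
    · simp at hx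
  refine inD_pair ?_ ?_
  · rw [sngl_val, sngl_val, verts_single, verts_single]
    rw [Set.singleton_union]
    exact SimpleGraph.isClique_pair.mpr fun _ => hadj
  · rw [show (sngl (G := G) v).val ++ (sngl (G := G) w).val
      = ([⟨v, g₀⟩, ⟨w, g₀⟩] : List (Ltr (fun _ : ι => Z2))) from rfl]
    rw [red_of_isRed _ hisred]
    refine ⟨hisred, ?_⟩
    intro a ha b hb _
    rw [show ([⟨v, g₀⟩, ⟨w, g₀⟩] : List (Ltr (fun _ : ι => Z2))).head?
      = some ⟨v, g₀⟩ from rfl, Option.mem_some_iff] at ha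
    rw [show ([⟨v, g₀⟩, ⟨w, g₀⟩] : List (Ltr (fun _ : ι => Z2))).getLast?
      = some ⟨w, g₀⟩ from rfl, Option.mem_some_iff] at hb
    subst ha
    subst hb
    exact hadj.ne

theorem adj_of_inD_pair_sngl {v w : ι} (hvw : v ≠ w)
    (h : ([sngl v, sngl w] : List (Carrier (fun _ : ι => Z2) G)) ∈ pgD _ G) : G.Adj v w := by
  have hcl := h.2.1
  refine hcl ?_ ?_ hvw
  · refine ⟨(sngl (G := G) v).val, by show _ ∈ [(sngl (G := G) v).val, (sngl (G := G) w).val]; simp, ?_⟩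
    rw [sngl_val, verts_single]
    rfl
  · refine ⟨(sngl (G := G) w).val, by show _ ∈ [(sngl (G := G) v).val, (sngl (G := G) w).val]; simp, ?_⟩
    rw [sngl_val, verts_single]
    rfl

theorem hom_one {f : Carrier (fun _ : ι => Z2) G → Carrier (fun _ : ι => Z2) G}
    (hf : IsHom (pgD _ G) (pgPi _ G) (pgD _ G) (pgPi _ G) f) : f (one _ G) = one _ G := by
  have h := hf.2 [] nil_mem_pgD
  simp only [List.map_nil] at h
  rw [pgPi_nil] at h
  exact h.symm

theorem hom_sngl {f : Carrier (fun _ : ι => Z2) G → Carrier (fun _ : ι => Z2) G}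
    (hf : IsHom (pgD _ G) (pgPi _ G) (pgD _ G) (pgPi _ G) f)
    (hinj : Function.Injective f) (v : ι) : ∃ w, f (sngl v) = sngl w := by
  have hP := hf.2 [sngl v, sngl v] (inD_sq v)
  simp only [List.map_cons, List.map_nil] at hP
  rw [pgPi_sq] at hP
  rw [hom_one hf] at hP
  have hne : f (sngl v) ≠ one _ G := by
    intro e
    have h2 : sngl (G := G) v = one _ G := hinj (by rw [e, hom_one hf])
    have := congrArg Subtype.val h2
    rw [sngl_val] at this
    exact List.cons_ne_nil _ _ this
  exact exists_sngl _ hne hP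

end Detect
section Split

variable {ι : Type*} [DecidableEq ι] {G : SimpleGraph ι}

theorem pair_of_cat (x u w : Carrier (fun _ : ι => Z2) G)
    (hcat : x.val = u.val ++ w.val) :
    [u, w] ∈ pgD _ G ∧ pgPi _ G [u, w] = x := by
  have hred : red _ (u.val ++ w.val) = x.val := by
    rw [← hcat]
    exact red_of_isRed _ x.2.1.1
  have hcl : G.IsClique (verts _ u.val ∪ verts _ w.val) := by
    have e : verts (fun _ : ι => Z2) u.val ∪ verts _ w.val = verts _ x.val := by
      ext i
      constructor
      · rintro (⟨y, hy, rfl⟩ | ⟨y, hy, rfl⟩) <;>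
          exact ⟨y, by rw [hcat]; exact List.mem_append.mpr (by tauto), rfl⟩
      · rintro ⟨y, hy, rfl⟩
        rw [hcat] at hy
        rcases List.mem_append.mp hy with hy | hy
        exacts [Or.inl ⟨y, hy, rfl⟩, Or.inr ⟨y, hy, rfl⟩]
    rw [e]
    exact x.2.2
  have hmem : Mem _ G (red _ (u.val ++ w.val)) := by
    rw [hred]
    exact x.2
  refine ⟨inD_pair hcl (by rw [hred]; exact x.2.1), ?_⟩
  rw [pgPi_pair hmem]
  exact Subtype.ext hred

theorem split_carrier (x : Carrier (fun _ : ι => Z2) G) (hlen : 2 ≤ x.val.length) :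
    ∃ u w : Carrier (fun _ : ι => Z2) G,
      u.val.length < x.val.length ∧ w.val.length < x.val.length ∧
      x.val = u.val ++ w.val ∧ [u, w] ∈ pgD _ G ∧ pgPi _ G [u, w] = x := by
  obtain ⟨l, hx⟩ := x
  match l, hx, hlen with
  | a :: b :: rest, hx, hlen => ?_
  clear hlen
  have hne : ∀ y ∈ (a :: b :: rest : List (Ltr (fun _ : ι => Z2))), y.2 ≠ 1 := hx.1.1.1
  have hch : (a :: b :: rest).Chain' (fun p q : Ltr (fun _ : ι => Z2) => p.1 ≠ q.1) := hx.1.1.2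
  have hclq := hx.2
  have hsub : ∀ (m : List (Ltr (fun _ : ι => Z2))),
      (∀ y ∈ m, y ∈ (a :: b :: rest : List (Ltr (fun _ : ι => Z2)))) →
      G.IsClique (verts _ m) :=
    fun m hm => hclq.subset (verts_subset hm)
  by_cases hc : rest = [] ∨ b.1 ≠ ((b :: rest).getLast (List.cons_ne_nil _ _)).1
  · -- split as [a] ++ (b :: rest)
    have hmu : Mem (fun _ : ι => Z2) G [a] := by
      refine ⟨isCycRed_single _ a (hne a (by simp)), ?_⟩
      exact hsub [a] (by simp)
    have hmw : Mem (fun _ : ι => Z2) G (b :: rest) := by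
      refine ⟨⟨⟨fun y hy => hne y (List.mem_cons_of_mem _ hy), hch.tail⟩, ?_⟩, ?_⟩
      · intro p hp q hq hlen2
        rw [show (b :: rest).head? = some b from rfl, Option.mem_some_iff] at hp
        rw [List.getLast?_eq_getLast (List.cons_ne_nil _ _), Option.mem_some_iff] at hq
        subst hp; subst hq
        rcases hc with hc | hc
        · subst hc
          simp at hlen2
        · exact hc
      · exact hsub _ fun y hy => List.mem_cons_of_mem _ hy
    refine ⟨⟨[a], hmu⟩, ⟨b :: rest, hmw⟩, by simp, by simp, rfl, ?_⟩
    have := pair_of_cat ⟨a :: b :: rest, hx⟩ ⟨[a], hmu⟩ ⟨b :: rest, hmw⟩ rfl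
    exact ⟨this.1, this.2⟩
  · push_neg at hc
    obtain ⟨hrest, hbl⟩ := hc
    match rest, hrest, hne, hch, hsub, hbl, hx with
    | c :: rest', _, hne, hch, hsub, hbl, hx => ?_
    have hab : a.1 ≠ b.1 := (List.isChain_cons_cons.mp (show List.IsChain (fun p q : Ltr (fun _ : ι => Z2) => p.1 ≠ q.1) (a :: b :: c :: rest') by unfold List.Chain' at hch; exact hch)).1
    have hbc : b.1 ≠ c.1 := (List.isChain_cons_cons.mp (show List.IsChain (fun p q : Ltr (fun _ : ι => Z2) => p.1 ≠ q.1) (b :: c :: rest') by unfold List.Chain' at hch; exact hch.tail)).1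
    have hmem_ab : ∀ y ∈ ([a, b] : List (Ltr (fun _ : ι => Z2))),
        y ∈ (a :: b :: c :: rest' : List (Ltr (fun _ : ι => Z2))) := by
      intro y hy
      simp only [List.mem_cons, List.not_mem_nil, or_false] at hy ⊢
      tauto
    have hmu : Mem (fun _ : ι => Z2) G [a, b] := by
      refine ⟨⟨⟨fun y hy => hne y (hmem_ab y hy), List.isChain_pair.mpr hab⟩, ?_⟩, hsub _ hmem_ab⟩
      intro p hp q hq _
      rw [show ([a, b] : List (Ltr (fun _ : ι => Z2))).head? = some a from rfl,
        Option.mem_some_iff] at hp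
      rw [show ([a, b] : List (Ltr (fun _ : ι => Z2))).getLast? = some b from rfl,
        Option.mem_some_iff] at hq
      subst hp; subst hq
      exact hab
    have hlast : ((b :: c :: rest').getLast (List.cons_ne_nil _ _))
        = ((c :: rest').getLast (List.cons_ne_nil _ _)) := by
      rw [List.getLast_cons (List.cons_ne_nil _ _)]
    have hmw : Mem (fun _ : ι => Z2) G (c :: rest') := by
      refine ⟨⟨⟨fun y hy => hne y (List.mem_cons_of_mem _ (List.mem_cons_of_mem _ hy)),
        hch.tail.tail⟩, ?_⟩, hsub _ fun y hy =>
          List.mem_cons_of_mem _ (List.mem_cons_of_mem _ hy)⟩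
      intro p hp q hq _
      rw [show (c :: rest').head? = some c from rfl, Option.mem_some_iff] at hp
      rw [List.getLast?_eq_getLast (List.cons_ne_nil _ _), Option.mem_some_iff] at hq
      subst hp; subst hq
      rw [← hlast, ← hbl]
      exact fun e => hbc e.symm
    refine ⟨⟨[a, b], hmu⟩, ⟨c :: rest', hmw⟩, by simp, by simp [Nat.lt_succ_iff], rfl, ?_⟩
    have := pair_of_cat ⟨a :: b :: c :: rest', hx⟩ ⟨[a, b], hmu⟩ ⟨c :: rest', hmw⟩ rfl
    exact ⟨this.1, this.2⟩

end Split
/-- For every simple graph `G`, the map `σ ↦ P(σ)` is a group isomorphism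
`Aut_Graphs(G) ≅ Aut_Part(P(G))`. -/
theorem statement7 {ι : Type*} [DecidableEq ι] (G : SimpleGraph ι) :
    ∃ Θ : ↥(graphAut G) →* ↥(pgAut (fun _ : ι => Z2) G),
      (∀ (σ : ↥(graphAut G)) (x : Carrier (fun _ : ι => Z2) G),
        ((Θ σ : Equiv.Perm (Carrier (fun _ : ι => Z2) G)) x).val
          = x.val.map fun p => ⟨(σ : Equiv.Perm ι) p.1, p.2⟩) ∧
      Function.Bijective Θ := by
  classical
  refine ⟨Θhom, fun σ x => rfl, ?_, ?_⟩
  · -- injectivity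
    intro σ τ h
    apply Subtype.ext
    apply Equiv.ext
    intro v
    have h2 := congrArg Subtype.val h
    have h3 := congrFun (congrArg (fun (e : Equiv.Perm (Carrier (fun _ : ι => Z2) G)) => ⇑e) h2)
      (sngl v)
    have h4 := congrArg Subtype.val h3
    have h5 : ([⟨(σ : Equiv.Perm ι) v, g₀⟩] : List (Ltr (fun _ : ι => Z2)))
        = [⟨(τ : Equiv.Perm ι) v, g₀⟩] := h4
    simpa using congrArg Sigma.fst (List.cons.injEq _ _ _ _ ▸ h5 : _).1
  · -- surjectivity
    rintro ⟨f, hf2⟩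
    have hf1 : IsHom (pgD (fun _ : ι => Z2) G) (pgPi _ G) (pgD _ G) (pgPi _ G) ⇑f := hf2.1
    have hf1' : IsHom (pgD (fun _ : ι => Z2) G) (pgPi _ G) (pgD _ G) (pgPi _ G) ⇑f.symm := hf2.2
    choose σ0 hσ0 using fun v : ι => hom_sngl (G := G) hf1 f.injective v
    choose τ0 hτ0 using fun v : ι => hom_sngl (G := G) hf1' f.symm.injective v
    have hlr : ∀ v, τ0 (σ0 v) = v := by
      intro v
      have h1 : f.symm (f (sngl v)) = sngl v := f.symm_apply_apply _
      rw [hσ0 v, hτ0 (σ0 v)] at h1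
      exact sngl_injective h1
    have hrl : ∀ v, σ0 (τ0 v) = v := by
      intro v
      have h1 : f (f.symm (sngl v)) = sngl v := f.apply_symm_apply _
      rw [hτ0 v, hσ0 (τ0 v)] at h1
      exact sngl_injective h1
    set σE : Equiv.Perm ι := ⟨σ0, τ0, hlr, hrl⟩ with hσE
    have hadj : ∀ a b, G.Adj a b → G.Adj (σ0 a) (σ0 b) := by
      intro a b hab
      have hD := hf1.1 [sngl a, sngl b] (inD_pair_sngl hab)
      simp only [List.map_cons, List.map_nil] at hD
      rw [hσ0 a, hσ0 b] at hD
      refine adj_of_inD_pair_sngl ?_ hD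
      intro e
      exact hab.ne (by rw [← hlr a, ← hlr b, e])
    have hadj' : ∀ a b, G.Adj a b → G.Adj (τ0 a) (τ0 b) := by
      intro a b hab
      have hD := hf1'.1 [sngl a, sngl b] (inD_pair_sngl hab)
      simp only [List.map_cons, List.map_nil] at hD
      rw [hτ0 a, hτ0 b] at hD
      refine adj_of_inD_pair_sngl ?_ hD
      intro e
      exact hab.ne (by rw [← hrl a, ← hrl b, e])
    have hσmem : σE ∈ graphAut G := ⟨hadj, hadj'⟩
    refine ⟨⟨σE, hσmem⟩, ?_⟩
    apply Subtype.ext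
    apply Equiv.ext
    intro x
    suffices hkey : ∀ n (x : Carrier (fun _ : ι => Z2) G), x.val.length = n →
        f x = fMap σE hσmem x by
      exact (hkey _ x rfl).symm
    intro n
    induction n using Nat.strong_induction_on with
    | _ n ih =>
      intro x hxn
      rcases Nat.lt_or_ge n 2 with h2 | h2
      · interval_cases n
        · have hx1 : x = one _ G := Subtype.ext (List.length_eq_zero_iff.mp hxn)
          rw [hx1, hom_one hf1]
          apply Subtype.ext
          rfl
        · obtain ⟨a, ha⟩ := List.length_eq_one_iff.mp hxn
          have hg : a.2 = g₀ :=
            z2_eq_g₀ _ (x.2.1.1.1 a (by rw [ha]; exact List.mem_singleton_self a))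
          have hx_sngl : x = sngl a.1 := by
            apply Subtype.ext
            rw [ha, sngl_val]
            cases a
            simp only [List.cons.injEq, and_true]
            exact congrArg _ hg
          rw [hx_sngl, hσ0]
          apply Subtype.ext
          rfl
      · obtain ⟨u, w, hu, hw, hcat, hD, hPi⟩ := split_carrier x (by omega)
        have h1 : f (pgPi _ G [u, w]) = pgPi _ G [f u, f w] := by
          have h0 := hf1.2 [u, w] hD
          simp only [List.map_cons, List.map_nil] at h0
          exact h0.symm
        have hmm : pgPi _ G [fMap σE hσmem u, fMap σE hσmem w] = fMap σE hσmem x := by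
          have h3 := pgPi_map σE hσmem [u, w]
          simp only [List.map_cons, List.map_nil] at h3
          rw [hPi] at h3
          exact h3
        rw [← hPi, h1, ih u.val.length (by rw [hxn] at hu; omega) u rfl,
          ih w.val.length (by rw [hxn] at hw; omega) w rfl, hPi]
        exact hmm

end PaperPG
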